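/- Let f' : [0,s'] → ℝ and f'' : [s', s'+s''] → ℝ be C^{1,1} functions with s', s'' > 0 and f'(s') = f''(s'), and let f := f' ∪ f'' be the function on [0, s'+s''] obtained by piecing them together. Define Q := f(s') − conv_{[0,s'+s'']} f (s'). Then Q ≥ 0, and the L¹-distance between the piecewise envelope derivatives and the global envelope derivative equals 2Q: ∫_0^{s'} [(conv_{[0,s']} f')'(τ) − (conv_{[0,s'+s'']} f)'(τ)] dτ + ∫_{s'}^{s'+s''} [(conv_{[0,s'+s'']} f)'(τ) − (conv_{[s',s'+s'']} f'')'(τ)] dτ = 2Q, and moreover both integrands are pointwise of the sign indicated (the first is nonnegative on [0,s'], the second nonnegative on [s',s'+s'']). -/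

import Mathlib

/-! Write `u`, `v`, `w` for the convex envelopes of `f` on `[0, s' + s'']`, `[0, s']`,
`[s', s' + s'']`. Restricted to either piece, `u` is a convex minorant of `f`, so `u ≤ v` and
`u ≤ w`. Take `τ ∈ [0, s']`. If `u τ < f τ`, the tangent of `u` at `τ` touches `f` at some
`p < τ` (otherwise it could be tilted upwards to the left of `τ`, contradicting the
differentiability of `u`), and comparing it at `p` with the tangent of `v` gives
`u' τ ≤ v' τ`. If `u τ = f τ`, then `u` and `v` touch at `τ` and the inequality comes from
`u ≤ v`; at `τ = s'` one first checks that the tangent of `v` lies below `f` on the whole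
interval. The inequality on `[s', s' + s'']` is the mirror image. Envelopes of a continuous
function agree with it at the endpoints, so each of the two integrals equals `f s' - u s' = Q`. -/

open Set

/-- The convex envelope of `g` on the interval `[a,b]`: the pointwise supremum of all
convex functions on `[a,b]` lying below `g` on `[a,b]`. -/
noncomputable def convEnv (a b : ℝ) (g : ℝ → ℝ) : ℝ → ℝ :=
  fun u => sSup {y : ℝ | ∃ h : ℝ → ℝ, ConvexOn ℝ (Set.Icc a b) h ∧
    (∀ x ∈ Set.Icc a b, h x ≤ g x) ∧ y = h u}

lemma le_of_hasDerivWithinAt_of_le_of_eq {F G : ℝ → ℝ} {s : Set ℝ} {x y d e : ℝ}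
    (hF : HasDerivWithinAt F d s x) (hG : HasDerivWithinAt G e s x)
    (hle : ∀ t ∈ s, F t ≤ G t) (heq : F x = G x) (hxy : segment ℝ x y ⊆ s) :
    d * (y - x) ≤ e * (y - x) := by
  have hmin : IsLocalMinOn (G - F) s x :=
    Filter.eventually_of_mem self_mem_nhdsWithin fun t ht => by
      simpa [heq] using hle t ht
  have hcone : y - x ∈ posTangentConeAt s x :=
    mem_posTangentConeAt_of_segment_subset (by rwa [add_sub_cancel])
  have := hmin.hasFDerivWithinAt_nonneg (hG.sub hF).hasFDerivWithinAt hcone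
  simp only [ContinuousLinearMap.toSpanSingleton_apply, smul_eq_mul] at this
  linear_combination this

lemma hasDerivAt_affine (c k x₀ x : ℝ) : HasDerivAt (fun z => c + k * (z - x₀)) k x := by
  simpa using (((hasDerivAt_id x).sub_const x₀).const_mul k).const_add c

lemma convexOn_affine {s : Set ℝ} (hs : Convex ℝ s) (c k x₀ : ℝ) :
    ConvexOn ℝ s (fun z => c + k * (z - x₀)) :=
  ⟨hs, fun x _ y _ p q _ _ hpq => le_of_eq <| by
    simp only [smul_eq_mul]; linear_combination (k * x₀ - c) * hpq⟩

lemma ConvexOn.add_mul_sub_le_of_hasDerivWithinAt {s : Set ℝ} {F : ℝ → ℝ} {x y d : ℝ}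
    (hF : ConvexOn ℝ s F) (hx : x ∈ s) (hy : y ∈ s) (hd : HasDerivWithinAt F d s x) :
    F x + d * (y - x) ≤ F y := by
  rcases lt_trichotomy x y with hxy | rfl | hyx
  · have := hF.le_slope_of_hasDerivWithinAt hx hy hxy hd
    rw [slope_def_field, le_div_iff₀ (sub_pos.2 hxy)] at this
    linarith
  · simp
  · have := hF.slope_le_of_hasDerivWithinAt hy hx hyx hd
    rw [slope_def_field, div_le_iff₀ (sub_pos.2 hyx)] at this
    linarith

section ConvexEnvelope

variable {a b : ℝ} {g : ℝ → ℝ}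

lemma convEnv_congr {g' : ℝ → ℝ} (h : EqOn g g' (Icc a b)) : convEnv a b g = convEnv a b g' := by
  funext x
  simp only [convEnv]
  congr 1
  ext y
  refine exists_congr fun k => and_congr_right fun _ => and_congr_left fun _ => ?_
  exact forall₂_congr fun z hz => by rw [h hz]

lemma le_convEnv {h : ℝ → ℝ} (hc : ConvexOn ℝ (Icc a b) h) (hle : ∀ z ∈ Icc a b, h z ≤ g z)
    {x : ℝ} (hx : x ∈ Icc a b) : h x ≤ convEnv a b g x :=
  le_csSup ⟨g x, by rintro _ ⟨k, -, hk, rfl⟩; exact hk x hx⟩ ⟨h, hc, hle, rfl⟩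

lemma add_mul_sub_le_convEnv {c k x₀ : ℝ} (hle : ∀ z ∈ Icc a b, c + k * (z - x₀) ≤ g z)
    {x : ℝ} (hx : x ∈ Icc a b) : c + k * (x - x₀) ≤ convEnv a b g x :=
  le_convEnv (convexOn_affine (convex_Icc a b) c k x₀) hle hx

lemma convEnv_le_of_forall (hg : BddBelow (g '' Icc a b)) {x y : ℝ}
    (H : ∀ h : ℝ → ℝ, ConvexOn ℝ (Icc a b) h → (∀ z ∈ Icc a b, h z ≤ g z) → h x ≤ y) :
    convEnv a b g x ≤ y := by
  obtain ⟨L, hL⟩ := hg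
  refine csSup_le ⟨L, fun _ => L, convexOn_const L (convex_Icc a b),
    fun z hz => hL (mem_image_of_mem g hz), rfl⟩ ?_
  rintro _ ⟨h, hc, hle, rfl⟩
  exact H h hc hle

lemma convEnv_le (hg : BddBelow (g '' Icc a b)) {x : ℝ} (hx : x ∈ Icc a b) :
    convEnv a b g x ≤ g x :=
  convEnv_le_of_forall hg fun _ _ hle => hle x hx

lemma convexOn_convEnv (hg : BddBelow (g '' Icc a b)) : ConvexOn ℝ (Icc a b) (convEnv a b g) := by
  refine ⟨convex_Icc a b, fun x hx y hy p q hp hq hpq => ?_⟩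
  refine convEnv_le_of_forall hg fun h hc hle => ?_
  calc h (p • x + q • y) ≤ p • h x + q • h y := hc.2 hx hy hp hq hpq
    _ ≤ p • convEnv a b g x + q • convEnv a b g y := by
      gcongr <;> exact le_convEnv hc hle ‹_›

lemma convEnv_le_convEnv_of_Icc_subset {c d x : ℝ} (hg : BddBelow (g '' Icc a b))
    (hsub : Icc c d ⊆ Icc a b) (hx : x ∈ Icc c d) : convEnv a b g x ≤ convEnv c d g x :=
  le_convEnv ((convexOn_convEnv hg).subset hsub (convex_Icc c d))
    (fun _ hz => convEnv_le hg (hsub hz)) hx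

lemma add_mul_sub_le_of_hasDerivWithinAt_convEnv {τ z d : ℝ} (hg : BddBelow (g '' Icc a b))
    (hτ : τ ∈ Icc a b) (hz : z ∈ Icc a b) (hd : HasDerivWithinAt (convEnv a b g) d (Icc a b) τ) :
    convEnv a b g τ + d * (z - τ) ≤ g z :=
  ((convexOn_convEnv hg).add_mul_sub_le_of_hasDerivWithinAt hτ hz hd).trans (convEnv_le hg hz)

lemma neg_mem_Icc_neg {x : ℝ} (hx : x ∈ Icc a b) : -x ∈ Icc (-b) (-a) :=
  ⟨neg_le_neg hx.2, neg_le_neg hx.1⟩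

lemma ConvexOn.comp_neg_Icc {h : ℝ → ℝ} (hc : ConvexOn ℝ (Icc a b) h) :
    ConvexOn ℝ (Icc (-b) (-a)) (fun z => h (-z)) := by
  have hpre : ⇑(-LinearMap.id : ℝ →ₗ[ℝ] ℝ) ⁻¹' Icc a b = Icc (-b) (-a) := by
    ext z
    simp only [LinearMap.coe_neg, LinearMap.id_coe, mem_preimage, Pi.neg_apply, id_eq, mem_Icc]
    constructor <;> intro hz <;> constructor <;> linarith [hz.1, hz.2]
  rw [← hpre]
  exact hc.comp_linearMap (-LinearMap.id)

lemma convEnv_neg (x : ℝ) : convEnv a b g x = convEnv (-b) (-a) (fun y => g (-y)) (-x) := by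
  simp only [convEnv]
  congr 1
  ext y
  constructor
  · rintro ⟨h, hc, hle, rfl⟩
    exact ⟨fun z => h (-z), hc.comp_neg_Icc,
      fun z hz => hle (-z) (by simpa using neg_mem_Icc_neg hz), by simp⟩
  · rintro ⟨h, hc, hle, rfl⟩
    refine ⟨fun z => h (-z), by simpa using hc.comp_neg_Icc, fun z hz => ?_, rfl⟩
    simpa using hle (-z) (neg_mem_Icc_neg hz)

lemma ContinuousOn.comp_neg_Icc (hg : ContinuousOn g (Icc a b)) :
    ContinuousOn (fun y => g (-y)) (Icc (-b) (-a)) :=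
  hg.comp continuousOn_neg fun z hz => by simpa using neg_mem_Icc_neg hz

lemma hasDerivWithinAt_convEnv_neg {d x : ℝ}
    (hd : HasDerivWithinAt (convEnv a b g) d (Icc a b) x) :
    HasDerivWithinAt (convEnv (-b) (-a) (fun y => g (-y))) (-d) (Icc (-b) (-a)) (-x) := by
  have heq : convEnv (-b) (-a) (fun y => g (-y)) = fun y => convEnv a b g (-y) := by
    funext y
    simpa using (convEnv_neg (a := a) (b := b) (g := g) (-y)).symm
  rw [heq]
  have := HasDerivWithinAt.comp_of_eq (-x) hd (hasDerivWithinAt_neg (-x) (Icc (-b) (-a)))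
    (fun z hz => by simpa using neg_mem_Icc_neg hz) (neg_neg x).symm
  rwa [mul_neg_one] at this

lemma convEnv_left_eq (hab : a ≤ b) (hg : ContinuousOn g (Icc a b)) :
    convEnv a b g a = g a := by
  have ha : a ∈ Icc a b := left_mem_Icc.2 hab
  obtain ⟨L, hL⟩ := isCompact_Icc.bddBelow_image hg
  refine le_antisymm (convEnv_le ⟨L, hL⟩ ha) (le_of_forall_lt_imp_le_of_dense fun c hc => ?_)
  obtain ⟨η, hη, hnear⟩ := Metric.continuousWithinAt_iff.1 (hg a ha) (g a - c) (sub_pos.2 hc)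
  -- the line through `(a, c)` that has dropped below `L` once it leaves the `η`-ball about `a`
  have hline : ∀ z ∈ Icc a b, c + -(|c - L| / η) * (z - a) ≤ g z := by
    intro z hz
    have hslope : 0 ≤ |c - L| / η * (z - a) := mul_nonneg (by positivity) (sub_nonneg.2 hz.1)
    rcases lt_or_ge (z - a) η with hzη | hzη
    · have := hnear hz (by rwa [Real.dist_eq, abs_of_nonneg (sub_nonneg.2 hz.1)])
      rw [Real.dist_eq] at this
      linarith [neg_abs_le (g z - g a)]
    · have : |c - L| ≤ |c - L| / η * (z - a) := by
        rw [div_mul_eq_mul_div, le_div_iff₀ hη]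
        exact mul_le_mul_of_nonneg_left hzη (abs_nonneg _)
      linarith [le_abs_self (c - L), hL (mem_image_of_mem g hz)]
  simpa using add_mul_sub_le_convEnv hline ha

lemma convEnv_right_eq (hab : a ≤ b) (hg : ContinuousOn g (Icc a b)) :
    convEnv a b g b = g b := by
  rw [convEnv_neg, convEnv_left_eq (neg_le_neg hab) hg.comp_neg_Icc, neg_neg]

end ConvexEnvelope

section ConvexEnvelopeDeriv

variable {a b : ℝ} {g : ℝ → ℝ}

lemma le_of_hasDerivWithinAt_convEnv_of_forall_le {τ d k : ℝ} (haτ : a < τ) (hτb : τ ≤ b)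
    (hd : HasDerivWithinAt (convEnv a b g) d (Icc a b) τ)
    (hline : ∀ z ∈ Icc a b, convEnv a b g τ + k * (z - τ) ≤ g z) : d ≤ k := by
  have := le_of_hasDerivWithinAt_of_le_of_eq (hasDerivAt_affine _ k τ τ).hasDerivWithinAt hd
    (fun z hz => add_mul_sub_le_convEnv hline hz) (by simp)
    ((convex_Icc a b).segment_subset ⟨haτ.le, hτb⟩ (left_mem_Icc.2 (haτ.le.trans hτb)))
  nlinarith

lemma exists_eq_tangent_left_of_convEnv_lt {τ d : ℝ} (haτ : a < τ) (hτb : τ ≤ b)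
    (hg : ContinuousOn g (Icc a b)) (hd : HasDerivWithinAt (convEnv a b g) d (Icc a b) τ)
    (hlt : convEnv a b g τ < g τ) :
    ∃ p ∈ Ico a τ, g p = convEnv a b g τ + d * (p - τ) := by
  set u := convEnv a b g
  have htan : ∀ z ∈ Icc a b, u τ + d * (z - τ) ≤ g z := fun z hz =>
    add_mul_sub_le_of_hasDerivWithinAt_convEnv (isCompact_Icc.bddBelow_image hg) ⟨haτ.le, hτb⟩ hz hd
  by_contra! hne
  have hpos : ∀ z ∈ Icc a τ, 0 < g z - (u τ + d * (z - τ)) := by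
    intro z hz
    rcases hz.2.lt_or_eq with hzτ | rfl
    · exact sub_pos.2 ((htan z ⟨hz.1, hzτ.le.trans hτb⟩).lt_of_ne (hne z ⟨hz.1, hzτ⟩).symm)
    · simpa using hlt
  obtain ⟨z, hz, hmin⟩ := isCompact_Icc.exists_isMinOn (nonempty_Icc.2 haτ.le)
    (f := fun z => g z - (u τ + d * (z - τ))) ((hg.mono (Icc_subset_Icc_right hτb)).sub
      (by fun_prop))
  set δ := g z - (u τ + d * (z - τ))
  have hδ : 0 < δ := hpos z hz
  set ε := δ / (τ - a)
  have hε : 0 < ε := div_pos hδ (sub_pos.2 haτ)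
  -- on `[a, τ]` the tilt by `ε` costs at most the gap `δ` between `g` and the tangent
  have htilt : ∀ x ∈ Icc a b, u τ + (d - ε) * (x - τ) ≤ g x := by
    intro x hx
    rcases le_total x τ with hxτ | hτx
    · have hδx : δ ≤ g x - (u τ + d * (x - τ)) := hmin ⟨hx.1, hxτ⟩
      have hεx : ε * (τ - x) ≤ δ := by
        calc ε * (τ - x) ≤ ε * (τ - a) := by gcongr; exact hx.1
          _ = δ := div_mul_cancel₀ δ (sub_pos.2 haτ).ne'
      linarith
    · nlinarith [htan x hx]
  linarith [le_of_hasDerivWithinAt_convEnv_of_forall_le haτ hτb hd htilt]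

theorem le_of_hasDerivWithinAt_convEnv_left {c τ d d' : ℝ} (hac : a < c) (hcb : c ≤ b)
    (hg : ContinuousOn g (Icc a b)) (hτ : τ ∈ Icc a c)
    (hd : HasDerivWithinAt (convEnv a b g) d (Icc a b) τ)
    (hd' : HasDerivWithinAt (convEnv a c g) d' (Icc a c) τ) : d ≤ d' := by
  set u := convEnv a b g
  set v := convEnv a c g
  have hsub : Icc a c ⊆ Icc a b := Icc_subset_Icc_right hcb
  have hgb : BddBelow (g '' Icc a b) := isCompact_Icc.bddBelow_image hg
  have hgc : BddBelow (g '' Icc a c) := hgb.mono (image_mono hsub)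
  have huv : ∀ x ∈ Icc a c, u x ≤ v x := fun x hx => convEnv_le_convEnv_of_Icc_subset hgb hsub hx
  rcases (convEnv_le hgb (hsub hτ)).lt_or_eq with hlt | heq
  · have haτ : a < τ := hτ.1.lt_of_ne <| by
      rintro rfl
      exact hlt.ne (convEnv_left_eq (hac.le.trans hcb) hg)
    obtain ⟨p, hp, hgp⟩ := exists_eq_tangent_left_of_convEnv_lt haτ (hτ.2.trans hcb) hg hd hlt
    nlinarith [add_mul_sub_le_of_hasDerivWithinAt_convEnv hgc hτ ⟨hp.1, hp.2.le.trans hτ.2⟩ hd',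
      huv τ hτ, hp.2]
  have hvu : v τ = u τ := le_antisymm ((convEnv_le hgc hτ).trans heq.ge) (huv τ hτ)
  rcases hτ.2.lt_or_eq with hτc | rfl
  · have := le_of_hasDerivWithinAt_of_le_of_eq (hd.mono hsub) hd' huv hvu.symm
      ((convex_Icc a c).segment_subset hτ (right_mem_Icc.2 hac.le))
    nlinarith
  have hd'd := le_of_hasDerivWithinAt_of_le_of_eq (hd.mono hsub) hd' huv hvu.symm
    ((convex_Icc a τ).segment_subset hτ (left_mem_Icc.2 hac.le))
  -- by `d' ≤ d`, the tangent of `v` at `τ` stays below the tangent of `u` beyond `τ`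
  refine le_of_hasDerivWithinAt_convEnv_of_forall_le hac hcb hd fun z hz => ?_
  show u τ + d' * (z - τ) ≤ g z
  rcases le_total z τ with hzτ | hτz
  · rw [← hvu]
    exact add_mul_sub_le_of_hasDerivWithinAt_convEnv hgc hτ ⟨hz.1, hzτ⟩ hd'
  · nlinarith [add_mul_sub_le_of_hasDerivWithinAt_convEnv hgb (hsub hτ) hz hd]

theorem le_of_hasDerivWithinAt_convEnv_right {c τ d d' : ℝ} (hac : a ≤ c) (hcb : c < b)
    (hg : ContinuousOn g (Icc a b)) (hτ : τ ∈ Icc c b)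
    (hd : HasDerivWithinAt (convEnv a b g) d (Icc a b) τ)
    (hd' : HasDerivWithinAt (convEnv c b g) d' (Icc c b) τ) : d' ≤ d := by
  have := le_of_hasDerivWithinAt_convEnv_left (neg_lt_neg hcb) (neg_le_neg hac) hg.comp_neg_Icc
    (neg_mem_Icc_neg hτ) (hasDerivWithinAt_convEnv_neg hd) (hasDerivWithinAt_convEnv_neg hd')
  linarith

end ConvexEnvelopeDeriv

section Integral

open MeasureTheory

variable {a b : ℝ}

lemma ConvexOn.monotoneOn_of_hasDerivWithinAt {s : Set ℝ} {F F' : ℝ → ℝ} (hF : ConvexOn ℝ s F)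
    (hd : ∀ x ∈ s, HasDerivWithinAt F (F' x) s x) : MonotoneOn F' s := by
  intro x hx y hy hxy
  rcases hxy.lt_or_eq with hlt | rfl
  · nlinarith [hF.add_mul_sub_le_of_hasDerivWithinAt hx hy (hd x hx),
      hF.add_mul_sub_le_of_hasDerivWithinAt hy hx (hd y hy)]
  · rfl

lemma ConvexOn.intervalIntegrable_of_hasDerivWithinAt {F F' : ℝ → ℝ} (hab : a ≤ b)
    (hF : ConvexOn ℝ (Icc a b) F) (hd : ∀ x ∈ Icc a b, HasDerivWithinAt F (F' x) (Icc a b) x) :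
    IntervalIntegrable F' volume a b :=
  MonotoneOn.intervalIntegrable (by rw [uIcc_of_le hab]; exact hF.monotoneOn_of_hasDerivWithinAt hd)

lemma integral_eq_sub_of_hasDerivWithinAt_Icc {F F' : ℝ → ℝ} (hab : a ≤ b)
    (hd : ∀ x ∈ Icc a b, HasDerivWithinAt F (F' x) (Icc a b) x)
    (hint : IntervalIntegrable F' volume a b) : ∫ x in a..b, F' x = F b - F a :=
  intervalIntegral.integral_eq_sub_of_hasDeriv_right_of_le hab
    (fun x hx => (hd x hx).continuousWithinAt)
    (fun x hx =>
      ((hd x (Ioo_subset_Icc_self hx)).hasDerivAt (Icc_mem_nhds hx.1 hx.2)).hasDerivWithinAt)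
    hint

end Integral

section ConvexEnvelopeIntegral

variable {a b c : ℝ} {g D D' : ℝ → ℝ}

lemma integral_sub_hasDerivWithinAt_convEnv_left (hac : a < c) (hcb : c ≤ b)
    (hg : ContinuousOn g (Icc a b))
    (hD : ∀ τ ∈ Icc a b, HasDerivWithinAt (convEnv a b g) (D τ) (Icc a b) τ)
    (hD' : ∀ τ ∈ Icc a c, HasDerivWithinAt (convEnv a c g) (D' τ) (Icc a c) τ) :
    ∫ τ in a..c, (D' τ - D τ) = g c - convEnv a b g c := by
  have hsub : Icc a c ⊆ Icc a b := Icc_subset_Icc_right hcb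
  have hgb := isCompact_Icc.bddBelow_image hg
  have hgc := isCompact_Icc.bddBelow_image (hg.mono hsub)
  have hDc : ∀ τ ∈ Icc a c, HasDerivWithinAt (convEnv a b g) (D τ) (Icc a c) τ :=
    fun τ hτ => (hD τ (hsub hτ)).mono hsub
  have hint := ((convexOn_convEnv hgb).subset hsub
    (convex_Icc a c)).intervalIntegrable_of_hasDerivWithinAt hac.le hDc
  have hint' := (convexOn_convEnv hgc).intervalIntegrable_of_hasDerivWithinAt hac.le hD'
  rw [intervalIntegral.integral_sub hint' hint,
    integral_eq_sub_of_hasDerivWithinAt_Icc hac.le hD' hint',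
    integral_eq_sub_of_hasDerivWithinAt_Icc hac.le hDc hint, convEnv_left_eq hac.le (hg.mono hsub),
    convEnv_right_eq hac.le (hg.mono hsub), convEnv_left_eq (hac.le.trans hcb) hg]
  ring

lemma integral_sub_hasDerivWithinAt_convEnv_right (hac : a ≤ c) (hcb : c < b)
    (hg : ContinuousOn g (Icc a b))
    (hD : ∀ τ ∈ Icc a b, HasDerivWithinAt (convEnv a b g) (D τ) (Icc a b) τ)
    (hD' : ∀ τ ∈ Icc c b, HasDerivWithinAt (convEnv c b g) (D' τ) (Icc c b) τ) :
    ∫ τ in c..b, (D τ - D' τ) = g c - convEnv a b g c := by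
  have hsub : Icc c b ⊆ Icc a b := Icc_subset_Icc_left hac
  have hgb := isCompact_Icc.bddBelow_image hg
  have hgc := isCompact_Icc.bddBelow_image (hg.mono hsub)
  have hDc : ∀ τ ∈ Icc c b, HasDerivWithinAt (convEnv a b g) (D τ) (Icc c b) τ :=
    fun τ hτ => (hD τ (hsub hτ)).mono hsub
  have hint := ((convexOn_convEnv hgb).subset hsub
    (convex_Icc c b)).intervalIntegrable_of_hasDerivWithinAt hcb.le hDc
  have hint' := (convexOn_convEnv hgc).intervalIntegrable_of_hasDerivWithinAt hcb.le hD'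
  rw [intervalIntegral.integral_sub hint hint',
    integral_eq_sub_of_hasDerivWithinAt_Icc hcb.le hD' hint',
    integral_eq_sub_of_hasDerivWithinAt_Icc hcb.le hDc hint, convEnv_left_eq hcb.le (hg.mono hsub),
    convEnv_right_eq hcb.le (hg.mono hsub), convEnv_right_eq (hac.trans hcb.le) hg]
  ring

end ConvexEnvelopeIntegral

theorem stmt12_general (s' s'' : ℝ) (hs' : 0 < s') (hs'' : 0 < s'')
    (f₁ f₂ f₁' f₂' : ℝ → ℝ)
    (hf₁ : ∀ x ∈ Set.Icc 0 s', HasDerivWithinAt f₁ (f₁' x) (Set.Icc 0 s') x)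
    (hf₂ : ∀ x ∈ Set.Icc s' (s' + s''),
      HasDerivWithinAt f₂ (f₂' x) (Set.Icc s' (s' + s'')) x)
    (hjoin : f₁ s' = f₂ s')
    (f : ℝ → ℝ) (hf : ∀ τ, f τ = if τ ≤ s' then f₁ τ else f₂ τ)
    (Q : ℝ) (hQ : Q = f s' - convEnv 0 (s' + s'') f s')
    (m' m'' m : ℝ → ℝ)
    (hm' : ∀ τ ∈ Set.Icc 0 s',
      HasDerivWithinAt (convEnv 0 s' f₁) (m' τ) (Set.Icc 0 s') τ)
    (hm'' : ∀ τ ∈ Set.Icc s' (s' + s''),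
      HasDerivWithinAt (convEnv s' (s' + s'') f₂) (m'' τ) (Set.Icc s' (s' + s'')) τ)
    (hm : ∀ τ ∈ Set.Icc 0 (s' + s''),
      HasDerivWithinAt (convEnv 0 (s' + s'') f) (m τ) (Set.Icc 0 (s' + s'')) τ) :
    0 ≤ Q ∧
    (∀ τ ∈ Set.Icc 0 s', m τ ≤ m' τ) ∧
    (∀ τ ∈ Set.Icc s' (s' + s''), m'' τ ≤ m τ) ∧
    (∫ τ in (0:ℝ)..s', (m' τ - m τ)) + (∫ τ in s'..(s' + s''), (m τ - m'' τ)) = 2 * Q := by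
  have hS : s' < s' + s'' := by linarith
  have hf₁f : EqOn f₁ f (Icc 0 s') := fun x hx => by simp [hf, hx.2]
  have hf₂f : EqOn f₂ f (Icc s' (s' + s'')) := fun x hx => by
    rcases hx.1.lt_or_eq with hx' | rfl
    · simp [hf, not_le.2 hx']
    · simp [hf, hjoin]
  have hcont : ContinuousOn f (Icc 0 (s' + s'')) := by
    rw [← Icc_union_Icc_eq_Icc hs'.le hS.le]
    exact ContinuousOn.union_of_isClosed
      ((HasDerivWithinAt.continuousOn hf₁).congr hf₁f.symm)
      ((HasDerivWithinAt.continuousOn hf₂).congr hf₂f.symm) isClosed_Icc isClosed_Icc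
  rw [convEnv_congr hf₁f] at hm'
  rw [convEnv_congr hf₂f] at hm''
  refine ⟨hQ ▸ sub_nonneg.2 (convEnv_le (isCompact_Icc.bddBelow_image hcont) ⟨hs'.le, hS.le⟩),
    fun τ hτ => le_of_hasDerivWithinAt_convEnv_left hs' hS.le hcont hτ
      (hm τ ⟨hτ.1, hτ.2.trans hS.le⟩) (hm' τ hτ),
    fun τ hτ => le_of_hasDerivWithinAt_convEnv_right hs'.le hS hcont hτ
      (hm τ ⟨hs'.le.trans hτ.1, hτ.2⟩) (hm'' τ hτ), ?_⟩
  rw [integral_sub_hasDerivWithinAt_convEnv_left hs' hS.le hcont hm hm',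
    integral_sub_hasDerivWithinAt_convEnv_right hs'.le hS hcont hm hm'', hQ]
  ring

theorem stmt12 (s' s'' : ℝ) (hs' : 0 < s') (hs'' : 0 < s'')
    (f₁ f₂ f₁' f₂' : ℝ → ℝ) (M : NNReal)
    (hf₁ : ∀ x ∈ Set.Icc 0 s', HasDerivWithinAt f₁ (f₁' x) (Set.Icc 0 s') x)
    (hf₂ : ∀ x ∈ Set.Icc s' (s' + s''),
      HasDerivWithinAt f₂ (f₂' x) (Set.Icc s' (s' + s'')) x)
    (hL₁ : LipschitzOnWith M f₁' (Set.Icc 0 s'))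
    (hL₂ : LipschitzOnWith M f₂' (Set.Icc s' (s' + s'')))
    (hjoin : f₁ s' = f₂ s')
    (f : ℝ → ℝ) (hf : ∀ τ, f τ = if τ ≤ s' then f₁ τ else f₂ τ)
    (Q : ℝ) (hQ : Q = f s' - convEnv 0 (s' + s'') f s')
    (m' m'' m : ℝ → ℝ)
    (hm' : ∀ τ ∈ Set.Icc 0 s',
      HasDerivWithinAt (convEnv 0 s' f₁) (m' τ) (Set.Icc 0 s') τ)
    (hm'' : ∀ τ ∈ Set.Icc s' (s' + s''),
      HasDerivWithinAt (convEnv s' (s' + s'') f₂) (m'' τ) (Set.Icc s' (s' + s'')) τ)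
    (hm : ∀ τ ∈ Set.Icc 0 (s' + s''),
      HasDerivWithinAt (convEnv 0 (s' + s'') f) (m τ) (Set.Icc 0 (s' + s'')) τ) :
    0 ≤ Q ∧
    (∀ τ ∈ Set.Icc 0 s', m τ ≤ m' τ) ∧
    (∀ τ ∈ Set.Icc s' (s' + s''), m'' τ ≤ m τ) ∧
    (∫ τ in (0:ℝ)..s', (m' τ - m τ)) + (∫ τ in s'..(s' + s''), (m τ - m'' τ)) = 2 * Q :=
  stmt12_general s' s'' hs' hs'' f₁ f₂ f₁' f₂' hf₁ hf₂ hjoin f hf Q hQ m' m'' m hm' hm'' hm
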